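/- Let a ≥ 0, n ≥ 1 an integer, 0 ≤ α ≤ β, and set μ_n(x) = (n/(n+β))·x + (a/(n+β))·x/(1+x) + (2α+1)/(2(n+β)) and γ_n(x) = T_{n,a}^{α,β}((t−x)²;x) + (μ_n(x) − x)². If g : [0,∞) → ℝ is twice continuously differentiable with g, g′ and g″ bounded, then for every x ≥ 0, |T_{n,a}^{α,β}(g;x) − g(μ_n(x))| ≤ γ_n(x)·‖g″‖, where ‖g″‖ = sup_{t≥0}|g″(t)|. -/

import Mathlib

open MeasureTheory Filter

/-- Rising factorial `(n)_i = n(n+1)⋯(n+i−1)`, with `(n)_0 = 1`. -/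
noncomputable def risingFac (n i : ℕ) : ℝ := ∏ j ∈ Finset.range i, ((n : ℝ) + j)

/-- `p_k(n,a) = Σ_{i=0}^{k} C(k,i)·(n)_i·a^{k−i}`. -/
noncomputable def pCoef (n : ℕ) (a : ℝ) (k : ℕ) : ℝ :=
  ∑ i ∈ Finset.range (k + 1), (Nat.choose k i : ℝ) * risingFac n i * a ^ (k - i)

/-- Generalized Baskakov basis function `W_{n,k}^a(x)`. -/
noncomputable def W (n : ℕ) (a : ℝ) (k : ℕ) (x : ℝ) : ℝ :=
  Real.exp (-(a * x) / (1 + x)) * (pCoef n a k / (Nat.factorial k : ℝ)) * x ^ k /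
    (1 + x) ^ (k + n)

/-- Stancu-type operator `L_{n,a}^{α,β}(f;x) = Σ_k W_{n,k}^a(x) f((k+α)/(n+β))`. -/
noncomputable def Lop (n : ℕ) (a α β : ℝ) (f : ℝ → ℝ) (x : ℝ) : ℝ :=
  ∑' k : ℕ, W n a k x * f (((k : ℝ) + α) / ((n : ℝ) + β))

/-- Generalized Baskakov–Kantorovich–Stancu operator `T_{n,a}^{α,β}(f;x)`. -/
noncomputable def TKS (n : ℕ) (a α β : ℝ) (f : ℝ → ℝ) (x : ℝ) : ℝ :=
  ((n : ℝ) + β) *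
    ∑' k : ℕ, W n a k x *
      ∫ t in (((k : ℝ) + α) / ((n : ℝ) + β))..(((k : ℝ) + α + 1) / ((n : ℝ) + β)), f t


open scoped Nat


lemma risingFac_eq (n i : ℕ) : risingFac n i = (Nat.ascFactorial n i : ℝ) := by
  induction i with
  | zero => simp [risingFac]
  | succ i ih =>
      rw [risingFac, Finset.prod_range_succ, ← risingFac, ih, Nat.ascFactorial_succ]
      push_cast; ring

lemma risingFac_succ (n i : ℕ) : risingFac n (i + 1) = n * risingFac (n + 1) i := by
  rw [risingFac, Finset.prod_range_succ', risingFac]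
  have : ∀ j ∈ Finset.range i, ((n : ℝ) + ((j + 1 : ℕ) : ℝ)) = ((n + 1 : ℕ) : ℝ) + j := by
    intro j _; push_cast; ring
  rw [Finset.prod_congr rfl this]
  push_cast; ring

lemma risingFac_nonneg (n i : ℕ) : 0 ≤ risingFac n i := by
  rw [risingFac_eq]; positivity

lemma hasSum_A (n : ℕ) (hn : 1 ≤ n) {u : ℝ} (hu0 : 0 ≤ u) (hu1 : u < 1) :
    HasSum (fun i => risingFac n i * u ^ i / i !) (1 / (1 - u) ^ n) := by
  obtain ⟨m, rfl⟩ : ∃ m, n = m + 1 := ⟨n - 1, by omega⟩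
  have h := hasSum_choose_mul_geometric_of_norm_lt_one (𝕜 := ℝ) m (r := u)
    (by rwa [Real.norm_eq_abs, abs_of_nonneg hu0])
  convert h using 2 with i
  · rfl
  rw [risingFac_eq, Nat.ascFactorial_eq_factorial_mul_choose]
  have hcs : (m + i).choose i = (i + m).choose m := by
    have := Nat.choose_symm (n := m + i) (k := i) (Nat.le_add_left i m)
    simpa [add_comm, Nat.add_sub_cancel] using this.symm
  rw [hcs]
  have hfac : (i ! : ℝ) ≠ 0 := by positivity
  push_cast
  field_simp

lemma hasSum_B {a u : ℝ} :
    HasSum (fun j => a ^ j * u ^ j / j !) (Real.exp (a * u)) := by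
  have h := NormedSpace.expSeries_div_hasSum_exp (a * u)
  rw [Real.exp_eq_exp_ℝ]
  simpa [mul_pow] using h

lemma hasSum_shift {f g : ℕ → ℝ} {S : ℝ} (h : HasSum g S) (h0 : f 0 = 0)
    (hs : ∀ i, f (i + 1) = g i) : HasSum f S := by
  have h1 : HasSum (fun i => f (i + 1)) S := by simpa [hs] using h
  have h2 := (hasSum_nat_add_iff (f := f) 1).mp h1
  simpa [h0] using h2

lemma hasSum_A1 (n : ℕ) (hn : 1 ≤ n) {u : ℝ} (hu0 : 0 ≤ u) (hu1 : u < 1) :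
    HasSum (fun i : ℕ => (i : ℝ) * (risingFac n i * u ^ i / i !))
      (u * n / (1 - u) ^ (n + 1)) := by
  have h := (hasSum_A (n + 1) (by omega) hu0 hu1).mul_left (u * n)
  apply hasSum_shift (g := fun i : ℕ => u * n * (risingFac (n + 1) i * u ^ i / i !))
  · convert h using 1
    · rfl
    ring
  · simp
  · intro i
    have hfac : (i ! : ℝ) ≠ 0 := by positivity
    rw [risingFac_succ]
    push_cast [Nat.factorial_succ]
    field_simp
    ring

lemma summable_A2 (n : ℕ) (hn : 1 ≤ n) {u : ℝ} (hu0 : 0 ≤ u) (hu1 : u < 1) :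
    Summable (fun i : ℕ => (i : ℝ) ^ 2 * (risingFac n i * u ^ i / i !)) := by
  have h1 := (hasSum_A1 (n + 1) (by omega) hu0 hu1).summable
  have h2 := (hasSum_A (n + 1) (by omega) hu0 hu1).summable
  have hsum : Summable (fun i : ℕ => u * n *
      (((i : ℝ) + 1) * (risingFac (n + 1) i * u ^ i / i !))) := by
    apply Summable.mul_left
    have := h1.add h2
    apply this.congr
    intro i; ring
  rw [← summable_nat_add_iff 1]
  apply hsum.congr
  intro i
  have hfac : (i ! : ℝ) ≠ 0 := by positivity
  rw [risingFac_succ]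
  push_cast [Nat.factorial_succ]
  field_simp
  ring

lemma hasSum_B1 {a u : ℝ} :
    HasSum (fun j : ℕ => (j : ℝ) * (a ^ j * u ^ j / j !)) (a * u * Real.exp (a * u)) := by
  apply hasSum_shift (g := fun j : ℕ => a * u * (a ^ j * u ^ j / j !))
  · exact hasSum_B.mul_left _
  · simp
  · intro j
    have hfac : (j ! : ℝ) ≠ 0 := by positivity
    push_cast [Nat.factorial_succ, pow_succ]
    field_simp

lemma summable_B2 {a u : ℝ} :
    Summable (fun j : ℕ => (j : ℝ) ^ 2 * (a ^ j * u ^ j / j !)) := by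
  have h1 := (hasSum_B1 (a := a) (u := u)).summable
  have h2 := (hasSum_B (a := a) (u := u)).summable
  have hsum : Summable (fun j : ℕ => a * u *
      (((j : ℝ) + 1) * (a ^ j * u ^ j / j !))) := by
    apply Summable.mul_left
    have := h1.add h2
    apply this.congr
    intro j; ring
  rw [← summable_nat_add_iff 1]
  apply hsum.congr
  intro j
  have hfac : (j ! : ℝ) ≠ 0 := by positivity
  push_cast [Nat.factorial_succ, pow_succ]
  field_simp

/-- Per-term Cauchy decomposition of `pCoef`. -/
lemma pCoef_mul_eq (n : ℕ) (a : ℝ) {u : ℝ} (k : ℕ) :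
    pCoef n a k * u ^ k / k ! =
      ∑ i ∈ Finset.range (k + 1),
        (risingFac n i * u ^ i / i !) * (a ^ (k - i) * u ^ (k - i) / (k - i)!) := by
  rw [pCoef, Finset.sum_mul, Finset.sum_div]
  apply Finset.sum_congr rfl
  intro i hi
  have hik : i ≤ k := by simpa [Nat.lt_succ_iff] using hi
  have hkey : (k.choose i : ℝ) * (i ! : ℝ) * ((k - i)! : ℝ) = (k ! : ℝ) := by
    exact_mod_cast congrArg (Nat.cast (R := ℝ)) (Nat.choose_mul_factorial_mul_factorial hik)
  have hu : u ^ i * u ^ (k - i) = u ^ k := by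
    rw [← pow_add]; congr 1; omega
  have h1 : (i ! : ℝ) ≠ 0 := by positivity
  have h2 : ((k - i)! : ℝ) ≠ 0 := by positivity
  have h3 : (k ! : ℝ) ≠ 0 := by positivity
  field_simp
  rw [← hkey, ← hu]
  ring

lemma summable_norm_A (n : ℕ) {u : ℝ} (hn : 1 ≤ n) (hu0 : 0 ≤ u) (hu1 : u < 1) :
    Summable (fun i : ℕ => ‖risingFac n i * u ^ i / (i ! : ℝ)‖) := by
  apply ((hasSum_A n hn hu0 hu1).summable).congr
  intro i
  have := risingFac_nonneg n i
  rw [Real.norm_eq_abs, abs_of_nonneg (by positivity)]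

lemma summable_norm_B {a u : ℝ} (ha : 0 ≤ a) (hu0 : 0 ≤ u) : Summable (fun j : ℕ => ‖a ^ j * u ^ j / (j ! : ℝ)‖) := by
  apply ((hasSum_B (a := a) (u := u)).summable).congr
  intro j
  rw [Real.norm_eq_abs, abs_of_nonneg (by positivity)]

lemma hasSum_P (n : ℕ) (a : ℝ) {u : ℝ} (ha : 0 ≤ a) (hn : 1 ≤ n) (hu0 : 0 ≤ u) (hu1 : u < 1) :
    HasSum (fun k => pCoef n a k * u ^ k / k !)
      (1 / (1 - u) ^ n * Real.exp (a * u)) := by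
  have h := hasSum_sum_range_mul_of_summable_norm
    (summable_norm_A n hn hu0 hu1) (summable_norm_B ha hu0)
  rw [(hasSum_A n hn hu0 hu1).tsum_eq, (hasSum_B (a := a) (u := u)).tsum_eq] at h
  apply h.congr_fun
  intro k
  rw [pCoef_mul_eq]

lemma hasSum_kP (n : ℕ) (a : ℝ) {u : ℝ} (ha : 0 ≤ a) (hn : 1 ≤ n) (hu0 : 0 ≤ u) (hu1 : u < 1) :
    HasSum (fun k : ℕ => (k : ℝ) * (pCoef n a k * u ^ k / k !))
      (u * n / (1 - u) ^ (n + 1) * Real.exp (a * u) +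
        1 / (1 - u) ^ n * (a * u * Real.exp (a * u))) := by
  have hnA1 : Summable (fun i : ℕ => ‖(i : ℝ) * (risingFac n i * u ^ i / (i ! : ℝ))‖) := by
    apply ((hasSum_A1 n hn hu0 hu1).summable).congr
    intro i
    have := risingFac_nonneg n i
    rw [Real.norm_eq_abs, abs_of_nonneg (by positivity)]
  have hnB1 : Summable (fun j : ℕ => ‖(j : ℝ) * (a ^ j * u ^ j / (j ! : ℝ))‖) := by
    apply ((hasSum_B1 (a := a) (u := u)).summable).congr
    intro j
    rw [Real.norm_eq_abs, abs_of_nonneg (by positivity)]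
  have h1 := hasSum_sum_range_mul_of_summable_norm hnA1 (summable_norm_B ha hu0)
  have h2 := hasSum_sum_range_mul_of_summable_norm (summable_norm_A n hn hu0 hu1) hnB1
  rw [(hasSum_A1 n hn hu0 hu1).tsum_eq, (hasSum_B (a := a) (u := u)).tsum_eq] at h1
  rw [(hasSum_A n hn hu0 hu1).tsum_eq, (hasSum_B1 (a := a) (u := u)).tsum_eq] at h2
  have h := h1.add h2
  apply h.congr_fun
  intro k
  rw [show (k : ℝ) * (pCoef n a k * u ^ k / k !) = (k : ℝ) *
    (∑ i ∈ Finset.range (k + 1),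
      (risingFac n i * u ^ i / i !) * (a ^ (k - i) * u ^ (k - i) / (k - i)!)) from by
    rw [pCoef_mul_eq]]
  rw [Finset.mul_sum, ← Finset.sum_add_distrib]
  apply Finset.sum_congr rfl
  intro i hi
  have hik : i ≤ k := by simpa [Nat.lt_succ_iff] using hi
  have : (k : ℝ) = (i : ℝ) + ((k - i : ℕ) : ℝ) := by
    push_cast [Nat.cast_sub hik]; ring
  rw [this]
  ring

lemma summable_k2P (n : ℕ) (a : ℝ) {u : ℝ} (ha : 0 ≤ a) (hn : 1 ≤ n) (hu0 : 0 ≤ u) (hu1 : u < 1) :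
    Summable (fun k : ℕ => (k : ℝ) ^ 2 * (pCoef n a k * u ^ k / k !)) := by
  have hnA2 : Summable (fun i : ℕ => ‖(i : ℝ) ^ 2 * (risingFac n i * u ^ i / (i ! : ℝ))‖) := by
    apply ((summable_A2 n hn hu0 hu1)).congr
    intro i
    have := risingFac_nonneg n i
    rw [Real.norm_eq_abs, abs_of_nonneg (by positivity)]
  have hnB2 : Summable (fun j : ℕ => ‖(j : ℝ) ^ 2 * (a ^ j * u ^ j / (j ! : ℝ))‖) := by
    apply ((summable_B2 (a := a) (u := u))).congr
    intro j
    rw [Real.norm_eq_abs, abs_of_nonneg (by positivity)]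
  have h1 := (hasSum_sum_range_mul_of_summable_norm hnA2
    (summable_norm_B ha hu0)).summable
  have h2 := (hasSum_sum_range_mul_of_summable_norm (summable_norm_A n hn hu0 hu1)
    hnB2).summable
  have hmaj := (h1.add h2).mul_left 2
  apply Summable.of_nonneg_of_le _ _ hmaj
  · intro k
    have : 0 ≤ pCoef n a k := by
      apply Finset.sum_nonneg
      intro i _
      have := risingFac_nonneg n i
      positivity
    positivity
  · intro k
    rw [pCoef_mul_eq n a, Finset.mul_sum, mul_add, Finset.mul_sum, Finset.mul_sum,
      ← Finset.sum_add_distrib]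
    apply Finset.sum_le_sum
    intro i hi
    have hik : i ≤ k := by simpa [Nat.lt_succ_iff] using hi
    have hk : (k : ℝ) = (i : ℝ) + ((k - i : ℕ) : ℝ) := by
      push_cast [Nat.cast_sub hik]; ring
    have hA0 : 0 ≤ risingFac n i * u ^ i / i ! := by
      have := risingFac_nonneg n i; positivity
    have hB0 : 0 ≤ a ^ (k - i) * u ^ (k - i) / (k - i)! := by positivity
    rw [hk]
    nlinarith [mul_nonneg hA0 hB0, sq_nonneg ((i : ℝ) - ((k - i : ℕ) : ℝ)),
      mul_nonneg (mul_nonneg (sq_nonneg ((i:ℝ) - ((k-i:ℕ):ℝ))) hA0) hB0]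

lemma pCoef_nonneg (n : ℕ) {a : ℝ} (ha : 0 ≤ a) (k : ℕ) : 0 ≤ pCoef n a k := by
  apply Finset.sum_nonneg
  intro i _
  have := risingFac_nonneg n i
  positivity

lemma W_nonneg (n : ℕ) {a : ℝ} (ha : 0 ≤ a) (k : ℕ) {x : ℝ} (hx : 0 ≤ x) :
    0 ≤ W n a k x := by
  have h1 : (0:ℝ) < 1 + x := by linarith
  have := pCoef_nonneg n ha k
  unfold W
  positivity

section
variable {x : ℝ} (hx : 0 ≤ x)

lemma W_eq (n : ℕ) (a : ℝ) (k : ℕ) {x : ℝ} (hx : 0 ≤ x) :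
    W n a k x = Real.exp (-(a * (x / (1 + x)))) * (1 - x / (1 + x)) ^ n *
      (pCoef n a k * (x / (1 + x)) ^ k / k !) := by
  have h1 : (0:ℝ) < 1 + x := by linarith
  have h1' : (1:ℝ) + x ≠ 0 := ne_of_gt h1
  have hu : 1 - x / (1 + x) = 1 / (1 + x) := by field_simp; ring
  unfold W
  rw [hu, div_pow, one_pow, div_pow, pow_add]
  rw [show -(a * x) / (1 + x) = -(a * (x / (1 + x))) by field_simp]
  field_simp

lemma hasSum_W (n : ℕ) {a : ℝ} (ha : 0 ≤ a) (hn : 1 ≤ n) {x : ℝ} (hx : 0 ≤ x) :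
    HasSum (fun k => W n a k x) 1 := by
  have h1 : (0:ℝ) < 1 + x := by linarith
  have hu0 : 0 ≤ x / (1 + x) := by positivity
  have hu1 : x / (1 + x) < 1 := by rw [div_lt_one h1]; linarith
  have h := (hasSum_P n a ha hn hu0 hu1).mul_left
    (Real.exp (-(a * (x / (1 + x)))) * (1 - x / (1 + x)) ^ n)
  have heq : (Real.exp (-(a * (x / (1 + x)))) * (1 - x / (1 + x)) ^ n) *
      (1 / (1 - x / (1 + x)) ^ n * Real.exp (a * (x / (1 + x)))) = 1 := by
    have hne : (1 - x / (1 + x)) ≠ 0 := by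
      have : 1 - x / (1 + x) = 1 / (1 + x) := by field_simp; ring
      rw [this]; positivity
    rw [show Real.exp (-(a * (x / (1 + x)))) * (1 - x / (1 + x)) ^ n *
      (1 / (1 - x / (1 + x)) ^ n * Real.exp (a * (x / (1 + x)))) =
        (Real.exp (-(a * (x / (1 + x)))) * Real.exp (a * (x / (1 + x)))) *
          ((1 - x / (1 + x)) ^ n / (1 - x / (1 + x)) ^ n) by ring,
      ← Real.exp_add, div_self (pow_ne_zero _ hne)]
    simp
  rw [heq] at h
  apply h.congr_fun
  intro k
  rw [W_eq n a k hx]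

lemma hasSum_kW (n : ℕ) {a : ℝ} (ha : 0 ≤ a) (hn : 1 ≤ n) {x : ℝ} (hx : 0 ≤ x) :
    HasSum (fun k : ℕ => (k : ℝ) * W n a k x) (n * x + a * x / (1 + x)) := by
  have h1 : (0:ℝ) < 1 + x := by linarith
  have h1' : (1:ℝ) + x ≠ 0 := ne_of_gt h1
  have hu0 : 0 ≤ x / (1 + x) := by positivity
  have hu1 : x / (1 + x) < 1 := by rw [div_lt_one h1]; linarith
  set u := x / (1 + x) with hu_def
  have hune : (1 - u) ≠ 0 := by
    have : 1 - u = 1 / (1 + x) := by rw [hu_def]; field_simp; ring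
    rw [this]; positivity
  have h := (hasSum_kP n a ha hn hu0 hu1).mul_left
    (Real.exp (-(a * u)) * (1 - u) ^ n)
  have heq : (Real.exp (-(a * u)) * (1 - u) ^ n) *
      (u * n / (1 - u) ^ (n + 1) * Real.exp (a * u) +
        1 / (1 - u) ^ n * (a * u * Real.exp (a * u))) = n * x + a * x / (1 + x) := by
    have hexp : Real.exp (-(a * u)) * Real.exp (a * u) = 1 := by
      rw [← Real.exp_add]; simp
    have h1u : 1 - u = 1 / (1 + x) := by rw [hu_def]; field_simp; ring
    have hux : u / (1 - u) = x := by
      rw [h1u, hu_def]; field_simp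
    have expand : (Real.exp (-(a * u)) * (1 - u) ^ n) *
      (u * n / (1 - u) ^ (n + 1) * Real.exp (a * u) +
        1 / (1 - u) ^ n * (a * u * Real.exp (a * u)))
        = (Real.exp (-(a * u)) * Real.exp (a * u)) * (n * (u / (1 - u)) + a * u) := by
      field_simp
      ring
    rw [expand, hexp, hux, one_mul, hu_def]
    ring
  rw [heq] at h
  apply h.congr_fun
  intro k
  rw [W_eq n a k hx]
  ring

lemma summable_k2W (n : ℕ) {a : ℝ} (ha : 0 ≤ a) (hn : 1 ≤ n) {x : ℝ} (hx : 0 ≤ x) :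
    Summable (fun k : ℕ => (k : ℝ) ^ 2 * W n a k x) := by
  have h1 : (0:ℝ) < 1 + x := by linarith
  have hu0 : 0 ≤ x / (1 + x) := by positivity
  have hu1 : x / (1 + x) < 1 := by rw [div_lt_one h1]; linarith
  have h := (summable_k2P n a ha hn hu0 hu1).mul_left
    (Real.exp (-(a * (x / (1 + x)))) * (1 - x / (1 + x)) ^ n)
  apply h.congr
  intro k
  rw [W_eq n a k hx]
  ring

end

lemma deriv_lipschitz {g : ℝ → ℝ} (hg : ContDiff ℝ 2 g) {M : ℝ}
    (hM : ∀ s : ℝ, 0 ≤ s → |deriv (deriv g) s| ≤ M) {s t : ℝ} (hs : 0 ≤ s) (ht : 0 ≤ t) :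
    |deriv g t - deriv g s| ≤ M * |t - s| := by
  have hdg : ContDiff ℝ 1 (deriv g) := by
    have h2 : ContDiff ℝ ((1 : ℕ) + 1 : ℕ) g := by exact_mod_cast hg
    exact ((contDiff_succ_iff_deriv).mp (by exact_mod_cast h2)).2.2
  have hdiff : ∀ y ∈ Set.Ici (0:ℝ), DifferentiableAt ℝ (deriv g) y :=
    fun y _ => (hdg.differentiable one_ne_zero).differentiableAt
  have := (convex_Ici (0:ℝ)).norm_image_sub_le_of_norm_deriv_le hdiff
    (fun y hy => by simpa [Real.norm_eq_abs] using hM y hy) (Set.mem_Ici.mpr hs)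
    (Set.mem_Ici.mpr ht)
  simpa [Real.norm_eq_abs] using this

lemma taylor_bound {g : ℝ → ℝ} (hg : ContDiff ℝ 2 g) {M μ : ℝ} (hμ : 0 ≤ μ)
    (hM : ∀ s : ℝ, 0 ≤ s → |deriv (deriv g) s| ≤ M) {t : ℝ} (ht : 0 ≤ t) :
    |g t - g μ - deriv g μ * (t - μ)| ≤ M / 2 * (t - μ) ^ 2 := by
  have hgdiff : Differentiable ℝ g := hg.differentiable (by norm_num)
  have hdgc : Continuous (deriv g) := hg.continuous_deriv (by norm_num)
  have hM0 : 0 ≤ M := le_trans (abs_nonneg _) (hM 0 le_rfl)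
  have hftc : ∀ p q : ℝ, g q - g p = ∫ s in p..q, deriv g s :=
    fun p q => (intervalIntegral.integral_deriv_eq_sub
      (fun s _ => (hgdiff s)) (hdgc.intervalIntegrable _ _)).symm
  have hrepr : g t - g μ - deriv g μ * (t - μ) =
      ∫ s in μ..t, (deriv g s - deriv g μ) := by
    rw [intervalIntegral.integral_sub (hdgc.intervalIntegrable _ _)
      (intervalIntegrable_const), intervalIntegral.integral_const, ← hftc]
    simp [smul_eq_mul]
    ring
  rw [hrepr]
  have hint1 : ∀ p q : ℝ, IntervalIntegrable (fun s => |deriv g s - deriv g μ|) MeasureTheory.volume p q :=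
    fun p q => ((hdgc.sub continuous_const).abs.intervalIntegrable _ _)
  have hint2 : ∀ p q c : ℝ, IntervalIntegrable (fun s => M * |s - c|) MeasureTheory.volume p q :=
    fun p q c => (continuous_const.mul ((continuous_id.sub continuous_const).abs)).intervalIntegrable _ _
  rcases le_total μ t with hc | hc
  · have h1 : |∫ s in μ..t, (deriv g s - deriv g μ)| ≤ ∫ s in μ..t, |deriv g s - deriv g μ| :=
      intervalIntegral.abs_integral_le_integral_abs hc
    have h2 : (∫ s in μ..t, |deriv g s - deriv g μ|) ≤ ∫ s in μ..t, M * |s - μ| := by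
      apply intervalIntegral.integral_mono_on hc (hint1 μ t) (hint2 μ t μ)
      intro s hs
      exact deriv_lipschitz hg hM hμ (le_trans hμ hs.1)
    have h3 : (∫ s in μ..t, M * |s - μ|) = M / 2 * (t - μ) ^ 2 := by
      have : ∀ s ∈ Set.uIcc μ t, M * |s - μ| = M * (s - μ) := by
        intro s hs
        rw [Set.uIcc_of_le hc] at hs
        rw [abs_of_nonneg (by linarith [hs.1])]
      rw [intervalIntegral.integral_congr this, intervalIntegral.integral_const_mul]
      have : (∫ s in μ..t, (s - μ)) = (t - μ) ^ 2 / 2 := by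
        rw [intervalIntegral.integral_sub intervalIntegral.intervalIntegrable_id
          intervalIntegrable_const, integral_id,
          intervalIntegral.integral_const]
        simp [smul_eq_mul]
        ring
      rw [this]; ring
    linarith
  · rw [intervalIntegral.integral_symm t μ, abs_neg]
    have h1 : |∫ s in t..μ, (deriv g s - deriv g μ)| ≤ ∫ s in t..μ, |deriv g s - deriv g μ| :=
      intervalIntegral.abs_integral_le_integral_abs hc
    have h2 : (∫ s in t..μ, |deriv g s - deriv g μ|) ≤ ∫ s in t..μ, M * |s - μ| := by
      apply intervalIntegral.integral_mono_on hc (hint1 t μ) (hint2 t μ μ)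
      intro s hs
      exact deriv_lipschitz hg hM hμ (le_trans ht hs.1)
    have h3 : (∫ s in t..μ, M * |s - μ|) = M / 2 * (t - μ) ^ 2 := by
      have : ∀ s ∈ Set.uIcc t μ, M * |s - μ| = M * (μ - s) := by
        intro s hs
        rw [Set.uIcc_of_le hc] at hs
        rw [abs_of_nonpos (by linarith [hs.2])]
        ring
      rw [intervalIntegral.integral_congr this, intervalIntegral.integral_const_mul]
      have : (∫ s in t..μ, (μ - s)) = (t - μ) ^ 2 / 2 := by
        rw [intervalIntegral.integral_sub intervalIntegrable_const
          intervalIntegral.intervalIntegrable_id, integral_id,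
          intervalIntegral.integral_const]
        simp [smul_eq_mul]
        ring
      rw [this]; ring
    linarith

set_option maxHeartbeats 1000000 in
theorem Top_taylor_estimate (a : ℝ) (ha : 0 ≤ a) (n : ℕ) (hn : 1 ≤ n) (α β : ℝ)
    (hα : 0 ≤ α) (hαβ : α ≤ β) (g : ℝ → ℝ) (hg : ContDiff ℝ 2 g)
    (hbounded : ∃ C : ℝ, ∀ t : ℝ, 0 ≤ t →
      |g t| ≤ C ∧ |deriv g t| ≤ C ∧ |deriv (deriv g) t| ≤ C)
    (x : ℝ) (hx : 0 ≤ x) :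
    |TKS n a α β g x -
        g (((n : ℝ) / ((n : ℝ) + β)) * x + (a / ((n : ℝ) + β)) * (x / (1 + x)) +
          (2 * α + 1) / (2 * ((n : ℝ) + β)))| ≤
      (TKS n a α β (fun t => (t - x) ^ 2) x +
          ((((n : ℝ) / ((n : ℝ) + β)) * x + (a / ((n : ℝ) + β)) * (x / (1 + x)) +
              (2 * α + 1) / (2 * ((n : ℝ) + β))) - x) ^ 2) *
        (⨆ t : {t : ℝ // 0 ≤ t}, |deriv (deriv g) t.val|) := by
  obtain ⟨C, hC⟩ := hbounded
  -- the sup of |g''| on [0,∞)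
  set M := ⨆ t : {t : ℝ // 0 ≤ t}, |deriv (deriv g) t.val| with hM_def
  have hMbdd : BddAbove (Set.range fun t : {t : ℝ // 0 ≤ t} => |deriv (deriv g) t.val|) :=
    ⟨C, by rintro _ ⟨t, rfl⟩; exact (hC t.val t.2).2.2⟩
  have hM : ∀ s : ℝ, 0 ≤ s → |deriv (deriv g) s| ≤ M := fun s hs =>
    le_ciSup hMbdd (⟨s, hs⟩ : {t : ℝ // 0 ≤ t})
  have hM0 : 0 ≤ M := le_trans (abs_nonneg _) (hM 0 le_rfl)
  have h1x : (0:ℝ) < 1 + x := by linarith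
  have hn1 : (1:ℝ) ≤ (n:ℝ) := by exact_mod_cast hn
  have hβ : 0 ≤ β := le_trans hα hαβ
  have hc : (0:ℝ) < (n:ℝ) + β := by linarith
  set c : ℝ := (n:ℝ) + β with hc_def
  set μ : ℝ := (n:ℝ) / c * x + a / c * (x / (1 + x)) + (2 * α + 1) / (2 * c) with hμ_def
  have hμ0 : 0 ≤ μ := by
    rw [hμ_def]
    have h1 : 0 ≤ (n:ℝ) / c * x := mul_nonneg (div_nonneg (by positivity) hc.le) hx
    have h2 : 0 ≤ a / c * (x / (1 + x)) :=
      mul_nonneg (div_nonneg ha hc.le) (div_nonneg hx h1x.le)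
    have h3 : 0 ≤ (2 * α + 1) / (2 * c) := div_nonneg (by linarith) (by linarith)
    linarith
  -- shorthand notation
  set Wk : ℕ → ℝ := fun k => W n a k x with hWk_def
  have hWpos : ∀ k, 0 ≤ Wk k := fun k => W_nonneg n ha k hx
  have hW1 : HasSum Wk 1 := hasSum_W n ha hn hx
  have hkW : HasSum (fun k : ℕ => (k : ℝ) * Wk k) (n * x + a * x / (1 + x)) :=
    hasSum_kW n ha hn hx
  have hk2W : Summable (fun k : ℕ => (k : ℝ) ^ 2 * Wk k) := summable_k2W n ha hn hx
  set l : ℕ → ℝ := fun k => ((k : ℝ) + α) / c with hl_def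
  set r : ℕ → ℝ := fun k => ((k : ℝ) + α + 1) / c with hr_def
  have hlr : ∀ k, l k ≤ r k := fun k =>
    div_le_div_of_nonneg_right (by linarith) hc.le
  have hl0 : ∀ k, 0 ≤ l k := fun k => div_nonneg (by positivity) hc.le
  have hrl : ∀ k, r k - l k = 1 / c := fun k => by
    rw [hl_def, hr_def]; field_simp; ring
  have hTKS : ∀ f : ℝ → ℝ, TKS n a α β f x = c * ∑' k, Wk k * ∫ t in l k..r k, f t := by
    intro f
    simp only [TKS, hWk_def, hl_def, hr_def, hc_def]
  -- integral of t
  have hIid : ∀ k, (∫ t in l k..r k, t) = ((k : ℝ) + α + 1/2) / c ^ 2 := by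
    intro k
    rw [integral_id, hl_def, hr_def]
    field_simp
    ring
  -- sum of W_k * ∫ t  equals μ / c
  have hSid : HasSum (fun k => Wk k * ∫ t in l k..r k, t) (μ / c) := by
    have h := (hkW.mul_left (1 / c ^ 2)).add (hW1.mul_left ((α + 1/2) / c ^ 2))
    have hval : 1 / c ^ 2 * (n * x + a * x / (1 + x)) + (α + 1/2) / c ^ 2 * 1 = μ / c := by
      rw [hμ_def]
      field_simp
    rw [hval] at h
    apply h.congr_fun
    intro k
    rw [hIid k]
    field_simp
    ring
  -- continuity facts
  have hgc : Continuous g := hg.continuous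
  have hqc : Continuous (fun t : ℝ => (t - x) ^ 2) :=
    ((continuous_id.sub continuous_const).pow 2)
  -- ∫ q ≥ 0 and summability of  W_k ∫ q
  have hIq_nonneg : ∀ k, 0 ≤ ∫ t in l k..r k, (t - x) ^ 2 := fun k =>
    intervalIntegral.integral_nonneg (hlr k) (fun t _ => sq_nonneg _)
  have hIq_le : ∀ k, (∫ t in l k..r k, (t - x) ^ 2) ≤ (r k + x) ^ 2 * (1 / c) := by
    intro k
    have hb : ∀ t ∈ Set.uIcc (l k) (r k), (t - x) ^ 2 ≤ (r k + x) ^ 2 := by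
      intro t ht
      rw [Set.uIcc_of_le (hlr k)] at ht
      have h1 : 0 ≤ t := le_trans (hl0 k) ht.1
      have h2 : t ≤ r k := ht.2
      have : |t - x| ≤ r k + x := by
        rw [abs_le]; constructor <;> nlinarith
      calc (t - x) ^ 2 = |t - x| ^ 2 := by rw [sq_abs]
        _ ≤ (r k + x) ^ 2 := by nlinarith [abs_nonneg (t - x)]
    calc (∫ t in l k..r k, (t - x) ^ 2) ≤ ∫ _t in l k..r k, (r k + x) ^ 2 := by
          apply intervalIntegral.integral_mono_on (hlr k)
            (hqc.intervalIntegrable _ _) intervalIntegrable_const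
          intro t ht
          exact hb t (by rw [Set.uIcc_of_le (hlr k)]; exact ht)
      _ = (r k + x) ^ 2 * (1 / c) := by
          rw [intervalIntegral.integral_const, smul_eq_mul, hrl k, mul_comm]
  have hSq : Summable (fun k => Wk k * ∫ t in l k..r k, (t - x) ^ 2) := by
    have hbound : ∀ k, Wk k * (∫ t in l k..r k, (t - x) ^ 2) ≤
        (2 / c ^ 3) * ((k:ℝ)^2 * Wk k) + ((2 * ((α + 1)/c + x) ^ 2) / c) * Wk k := by
      intro k
      have h1 : (r k + x) ^ 2 ≤ 2 * ((k:ℝ)/c) ^ 2 + 2 * ((α + 1)/c + x) ^ 2 := by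
        have : r k + x = (k:ℝ)/c + ((α + 1)/c + x) := by
          rw [hr_def]; field_simp; ring
        rw [this]
        nlinarith [sq_nonneg ((k:ℝ)/c - ((α + 1)/c + x))]
      have h2 := mul_le_mul_of_nonneg_left (le_trans (hIq_le k)
        (mul_le_mul_of_nonneg_right h1 (by positivity))) (hWpos k)
      calc Wk k * (∫ t in l k..r k, (t - x) ^ 2)
          ≤ Wk k * ((2 * ((k:ℝ)/c) ^ 2 + 2 * ((α + 1)/c + x) ^ 2) * (1/c)) := h2
        _ = (2 / c ^ 3) * ((k:ℝ)^2 * Wk k) + ((2 * ((α + 1)/c + x) ^ 2) / c) * Wk k := by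
            field_simp
    apply Summable.of_nonneg_of_le
      (fun k => mul_nonneg (hWpos k) (hIq_nonneg k)) hbound
    exact (hk2W.mul_left _).add (hW1.summable.mul_left _)
  -- summability of W_k ∫ g
  have hIg_bound : ∀ k, |∫ t in l k..r k, g t| ≤ C * (1 / c) := by
    intro k
    have := intervalIntegral.norm_integral_le_of_norm_le_const
      (C := C) (f := g) (a := l k) (b := r k) ?_
    · rw [Real.norm_eq_abs] at this
      calc |∫ t in l k..r k, g t| ≤ C * |r k - l k| := this
        _ = C * (1 / c) := by rw [hrl k, abs_of_pos (by positivity)]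
    · intro t ht
      rw [Set.uIoc_of_le (hlr k)] at ht
      exact (hC t (le_trans (hl0 k) ht.1.le)).1
  have hSg : Summable (fun k => Wk k * ∫ t in l k..r k, g t) := by
    apply Summable.of_norm_bounded (g := fun k => (C * (1 / c)) * Wk k)
      (hW1.summable.mul_left _)
    intro k
    rw [Real.norm_eq_abs, abs_mul, abs_of_nonneg (hWpos k)]
    calc Wk k * |∫ t in l k..r k, g t| ≤ Wk k * (C * (1/c)) :=
        mul_le_mul_of_nonneg_left (hIg_bound k) (hWpos k)
      _ = (C * (1 / c)) * Wk k := by ring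
  -- the Taylor remainder function
  set h : ℝ → ℝ := fun t => g t - g μ - deriv g μ * (t - μ) with hh_def
  have hhc : Continuous h := by
    rw [hh_def]
    exact (hgc.sub continuous_const).sub
      (continuous_const.mul (continuous_id.sub continuous_const))
  have hIh : ∀ k, (∫ t in l k..r k, h t)
      = (∫ t in l k..r k, g t) - g μ * (1/c)
        - deriv g μ * ((∫ t in l k..r k, t) - μ * (1/c)) := by
    intro k
    have e2 : ∀ t : ℝ, h t = g t - ((g μ - deriv g μ * μ) + deriv g μ * t) := by
      intro t; rw [hh_def]; ring
    have hcont2 : Continuous (fun t : ℝ => g μ - deriv g μ * μ + deriv g μ * t) := by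
      fun_prop
    have hcont3 : Continuous (fun t : ℝ => deriv g μ * t) := by fun_prop
    rw [intervalIntegral.integral_congr (g := fun t => g t - (g μ - deriv g μ * μ + deriv g μ * t)) (fun t _ => e2 t),
      intervalIntegral.integral_sub (hgc.intervalIntegrable _ _)
        (hcont2.intervalIntegrable _ _),
      intervalIntegral.integral_add intervalIntegrable_const
        (hcont3.intervalIntegrable _ _),
      intervalIntegral.integral_const_mul, intervalIntegral.integral_const,
      smul_eq_mul, hrl k, hIid k]
    field_simp
    ring
  -- Step A : T(g) - g(μ) = c * Σ W_k ∫ h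
  have hSh_hasSum : HasSum (fun k => Wk k * ∫ t in l k..r k, h t)
      ((∑' k, Wk k * ∫ t in l k..r k, g t) - g μ / c) := by
    have h2 : HasSum (fun k => (g μ / c) * Wk k
        + deriv g μ * ((Wk k * ∫ t in l k..r k, t) - (μ/c) * Wk k))
        ((g μ / c) * 1 + deriv g μ * (μ/c - (μ/c) * 1)) :=
      (hW1.mul_left _).add ((hSid.sub (hW1.mul_left (μ/c))).mul_left (deriv g μ))
    have h3 := hSg.hasSum.sub h2
    simp only [mul_one, sub_self, mul_zero, add_zero] at h3
    apply h3.congr_fun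
    intro k
    rw [hIh k]
    field_simp
    ring
  have hstepA : TKS n a α β g x - g μ = c * ∑' k, Wk k * ∫ t in l k..r k, h t := by
    rw [hSh_hasSum.tsum_eq, hTKS g, mul_sub, mul_div_cancel₀ _ hc.ne']
  -- Step B : termwise bound
  have hIh_bound : ∀ k, |∫ t in l k..r k, h t| ≤
      M * (∫ t in l k..r k, (t - x)^2) + (M * (μ - x)^2) * (1/c) := by
    intro k
    have hb : ∀ t ∈ Set.uIcc (l k) (r k), |h t| ≤ M * (t - x)^2 + M * (μ - x)^2 := by
      intro t ht
      rw [Set.uIcc_of_le (hlr k)] at ht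
      have ht0 : 0 ≤ t := le_trans (hl0 k) ht.1
      have h1 : |h t| ≤ M / 2 * (t - μ)^2 := by
        rw [hh_def]; exact taylor_bound hg hμ0 hM ht0
      have h2 : (t - μ)^2 ≤ 2*(t - x)^2 + 2*(μ - x)^2 := by
        nlinarith [sq_nonneg (t + μ - 2*x)]
      have h3 := mul_le_mul_of_nonneg_left h2 (by linarith : (0:ℝ) ≤ M / 2)
      have h4 : M / 2 * (2 * (t - x) ^ 2 + 2 * (μ - x) ^ 2)
          = M * (t - x) ^ 2 + M * (μ - x) ^ 2 := by ring
      exact h1.trans (h3.trans_eq h4)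
    calc |∫ t in l k..r k, h t| ≤ ∫ t in l k..r k, |h t| :=
        intervalIntegral.abs_integral_le_integral_abs (hlr k)
      _ ≤ ∫ t in l k..r k, (M * (t - x)^2 + M * (μ - x)^2) := by
          apply intervalIntegral.integral_mono_on (hlr k) (hhc.abs.intervalIntegrable _ _)
            (((continuous_const.mul hqc).add continuous_const).intervalIntegrable _ _)
          intro t ht
          exact hb t (by rw [Set.uIcc_of_le (hlr k)]; exact ht)
      _ = M * (∫ t in l k..r k, (t - x)^2) + (M * (μ - x)^2) * (1/c) := by
          rw [intervalIntegral.integral_add (f := fun t => M * (t - x) ^ 2)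
              ((continuous_const.mul hqc).intervalIntegrable _ _)
            intervalIntegrable_const, intervalIntegral.integral_const_mul,
            intervalIntegral.integral_const, smul_eq_mul, hrl k]
          ring
  have habs_term : ∀ k, |Wk k * ∫ t in l k..r k, h t| ≤
      M * (Wk k * ∫ t in l k..r k, (t - x)^2) + ((M * (μ - x)^2) / c) * Wk k := by
    intro k
    rw [abs_mul, abs_of_nonneg (hWpos k)]
    calc Wk k * |∫ t in l k..r k, h t|
        ≤ Wk k * (M * (∫ t in l k..r k, (t - x)^2) + (M * (μ - x)^2) * (1/c)) :=
          mul_le_mul_of_nonneg_left (hIh_bound k) (hWpos k)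
      _ = M * (Wk k * ∫ t in l k..r k, (t - x)^2) + ((M * (μ - x)^2) / c) * Wk k := by
          ring
  have hmaj : Summable (fun k => M * (Wk k * ∫ t in l k..r k, (t - x)^2)
      + ((M * (μ - x)^2) / c) * Wk k) :=
    (hSq.mul_left M).add (hW1.summable.mul_left _)
  have habs_sum : Summable (fun k => |Wk k * ∫ t in l k..r k, h t|) :=
    Summable.of_nonneg_of_le (fun k => abs_nonneg _) habs_term hmaj
  have hfinal : |∑' k, Wk k * ∫ t in l k..r k, h t| ≤
      M * (∑' k, Wk k * ∫ t in l k..r k, (t - x)^2) + (M * (μ - x)^2) / c := by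
    calc |∑' k, Wk k * ∫ t in l k..r k, h t|
        ≤ ∑' k, |Wk k * ∫ t in l k..r k, h t| := by
          have := norm_tsum_le_tsum_norm (f := fun k => Wk k * ∫ t in l k..r k, h t)
            (by simpa [Real.norm_eq_abs, abs_mul] using habs_sum)
          simpa [Real.norm_eq_abs, abs_mul] using this
      _ ≤ ∑' k, (M * (Wk k * ∫ t in l k..r k, (t - x)^2) + ((M * (μ - x)^2) / c) * Wk k) :=
          Summable.tsum_le_tsum habs_term habs_sum hmaj
      _ = M * (∑' k, Wk k * ∫ t in l k..r k, (t - x)^2) + (M * (μ - x)^2) / c := by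
          rw [Summable.tsum_add (hSq.mul_left M) (hW1.summable.mul_left _), tsum_mul_left,
            tsum_mul_left, hW1.tsum_eq, mul_one]
  -- conclusion
  rw [hstepA, hTKS (fun t => (t - x)^2), abs_mul, abs_of_pos hc]
  calc c * |∑' k, Wk k * ∫ t in l k..r k, h t|
      ≤ c * (M * (∑' k, Wk k * ∫ t in l k..r k, (t - x)^2) + (M * (μ - x)^2) / c) :=
        mul_le_mul_of_nonneg_left hfinal hc.le
    _ = (c * (∑' k, Wk k * ∫ t in l k..r k, (t - x)^2) + (μ - x)^2) * M := by
        field_simp
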